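/- arXiv:1310.6648 — 2 statements merged into one kernel-verified Lean document; each statement's English description precedes it below -/
import Mathlib

section
/- Let n be a positive integer with n ≡ 1 (mod 6) or n ≡ 5 (mod 6). Then the cokernel group G_n is the trivial group. -/
open Matrix

/-- The adjacency matrix of the Cayley graph `C_n` of `ℤ/nℤ` with respect to `{1, n-1}`. -/
def cayleyAdj (n : ℕ) : Matrix (ZMod n) (ZMod n) ℤ :=
  Matrix.of fun i j => (if j = i + 1 then 1 else 0) + (if j = i - 1 then 1 else 0)

/-- The matrix `B_n = I - A_nᵀ`. -/
def cayleyB (n : ℕ) : Matrix (ZMod n) (ZMod n) ℤ :=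
  1 - (cayleyAdj n)ᵀ

/-- The image of `B_n`, viewed as a linear map by matrix-vector multiplication. -/
def imB (n : ℕ) [NeZero n] : Submodule ℤ (ZMod n → ℤ) :=
  LinearMap.range (cayleyB n).mulVecLin

/-- The cokernel group `G_n = (ZMod n → ℤ) ⧸ Im(B_n)`. -/
abbrev cayleyCoker (n : ℕ) [NeZero n] : Type :=
  (ZMod n → ℤ) ⧸ imB n

/-- The class `[e_i]` of the standard basis vector `e_i` in `G_n`. -/
def eClass (n : ℕ) [NeZero n] (i : ZMod n) : cayleyCoker n :=
  Submodule.Quotient.mk (Pi.single i 1)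

/-!
The relation `B_n e_i = 0` in `G_n` reads `[e_i] = [e_{i+1}] + [e_{i-1}]`. Any sequence with
this recurrence satisfies `e_{i+3} = -e_i`, so it is `6`-periodic. When `gcd(6, n) = 1`, every
residue is a multiple of `6`, so the sequence is constant, and then the recurrence `e = e + e`
forces it to vanish. Since the `[e_i]` generate `G_n`, the group is trivial.
-/

theorem ZMod.eq_of_add_periodic {α : Type*} {n : ℕ} {f : ZMod n → α} {a : ZMod n}
    (ha : IsUnit a) (hf : Function.Periodic f a) (i j : ZMod n) : f i = f j := by
  obtain ⟨u, rfl⟩ := ha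
  obtain ⟨k, hk⟩ := ZMod.intCast_surjective (((u⁻¹ : (ZMod n)ˣ) : ZMod n) * (j - i))
  have hji : j = i + k • (u : ZMod n) := by
    rw [zsmul_eq_mul, hk, mul_comm, Units.mul_inv_cancel_left, add_sub_cancel]
  rw [hji, hf.zsmul k]

section Recurrence

variable {M : Type*} [AddCommGroup M] {n : ℕ} {e : ZMod n → M}

theorem add_three_eq_neg_of_eq_add (he : ∀ i, e i = e (i + 1) + e (i - 1)) (i : ZMod n) :
    e (i + 3) = -e i := by
  have h₁ := he (i + 1)
  have h₂ := he (i + 2)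
  rw [add_sub_cancel_right, add_assoc, one_add_one_eq_two] at h₁
  rw [add_assoc, two_add_one_eq_three, show i + 2 - 1 = i + 1 by ring] at h₂
  linear_combination (norm := module) -h₁ - h₂

theorem periodic_six_of_eq_add (he : ∀ i, e i = e (i + 1) + e (i - 1)) :
    Function.Periodic e 6 := fun i => by
  rw [show (6 : ZMod n) = 3 + 3 by norm_num, ← add_assoc, add_three_eq_neg_of_eq_add he,
    add_three_eq_neg_of_eq_add he, neg_neg]

theorem eq_zero_of_eq_add (he : ∀ i, e i = e (i + 1) + e (i - 1)) (h6 : IsUnit (6 : ZMod n))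
    (i : ZMod n) : e i = 0 := by
  have hconst := ZMod.eq_of_add_periodic h6 (periodic_six_of_eq_add he)
  have hi := he i
  rwa [hconst (i + 1) i, hconst (i - 1) i, left_eq_add] at hi

end Recurrence

theorem cayleyB_mulVec_single (n : ℕ) [NeZero n] (i : ZMod n) :
    cayleyB n *ᵥ Pi.single i 1 = Pi.single i 1 - (Pi.single (i + 1) 1 + Pi.single (i - 1) 1) := by
  funext r
  simp [cayleyB, cayleyAdj, Matrix.mulVec_single, Pi.single_apply, Matrix.one_apply, eq_comm]

theorem eClass_eq_add (n : ℕ) [NeZero n] (i : ZMod n) :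
    eClass n i = eClass n (i + 1) + eClass n (i - 1) := by
  rw [← sub_eq_zero]
  refine (Submodule.Quotient.mk_eq_zero (imB n)).2 ⟨Pi.single i 1, ?_⟩
  rw [Matrix.mulVecLin_apply, cayleyB_mulVec_single]

theorem cayleyCoker_subsingleton_of_eClass_eq_zero (n : ℕ) [NeZero n]
    (h : ∀ i, eClass n i = 0) : Subsingleton (cayleyCoker n) := by
  have hmkQ : (imB n).mkQ = 0 :=
    (Pi.basisFun ℤ (ZMod n)).ext fun i => by rw [Pi.basisFun_apply]; exact h i
  refine ⟨fun x y => ?_⟩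
  obtain ⟨x, rfl⟩ := (imB n).mkQ_surjective x
  obtain ⟨y, rfl⟩ := (imB n).mkQ_surjective y
  rw [hmkQ]
  rfl

theorem coker_trivial_of_one_or_five_mod_six (n : ℕ) [NeZero n]
    (h : n % 6 = 1 ∨ n % 6 = 5) :
    Subsingleton (cayleyCoker n) := by
  have hcop : Nat.Coprime 6 n := by
    rw [Nat.Coprime, Nat.gcd_rec]
    rcases h with h | h <;> rw [h] <;> rfl
  have h6 : IsUnit (6 : ZMod n) := by
    exact_mod_cast (ZMod.isUnit_iff_coprime 6 n).2 hcop
  exact cayleyCoker_subsingleton_of_eClass_eq_zero n (eq_zero_of_eq_add (eClass_eq_add n) h6)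
end

section
/- The graph monoid M_{C_3} has exactly five elements, namely the classes [0], [e_0], [e_1], [e_2], and [e_0 + e_1 + e_2], and these five classes are pairwise distinct. -/
/-- The generating relations of the graph monoid of `C_n`:
`e_i ~ e_{i-1} + e_{i+1}` for each `i : ZMod n`. -/
def graphRel (n : ℕ) (x y : ZMod n → ℕ) : Prop :=
  ∃ i : ZMod n, x = Pi.single i 1 ∧ y = Pi.single (i - 1) 1 + Pi.single (i + 1) 1

/-- The additive congruence on the free abelian monoid `ZMod n → ℕ`
generated by the relations `e_i ~ e_{i-1} + e_{i+1}`. -/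
def graphCon (n : ℕ) : AddCon (ZMod n → ℕ) :=
  addConGen (graphRel n)

/-- The graph monoid `M_{C_n}` of the Cayley graph `C_n`. -/
abbrev graphMonoid (n : ℕ) : Type :=
  (graphCon n).Quotient

/-- The congruence class `[x]` of `x : ZMod n → ℕ` in the graph monoid `M_{C_n}`. -/
def cls (n : ℕ) (x : ZMod n → ℕ) : graphMonoid n :=
  (x : (graphCon n).Quotient)

/-!
Each relation says that a generator is the sum of the other two, so in `M_{C_3}` the sum of two
distinct generators is the third, `[e_i] + [e_i] = [e_0 + e_1 + e_2]` for every `i`, and this class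
fixes every generator. Hence every class other than `[0]` is a generator or `[e_0 + e_1 + e_2]`:
the monoid is a Klein four-group with a new zero adjoined. To separate the five classes, send
`e_0, e_1, e_2` to the three nonzero vectors of `(ZMod 2)²`, which satisfy the same relations, and
`0` alone to the adjoined zero of `WithZero ((ZMod 2)²)`.
-/

theorem Pi.induction_add_single {ι : Type*} [Finite ι] [DecidableEq ι] {p : (ι → ℕ) → Prop}
    (zero : p 0) (add_single : ∀ x i, p x → p (x + Pi.single i 1)) (x : ι → ℕ) : p x := by
  suffices h : ∀ y, p y → p (y + x) by simpa using h 0 zero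
  induction x using Pi.single_induction with
  | zero => exact fun y hy => by rwa [add_zero]
  | add f g hf hg => exact fun y hy => add_assoc y f g ▸ hg _ (hf y hy)
  | single i m =>
    induction m with
    | zero => exact fun y hy => by rwa [Pi.single_zero, add_zero]
    | succ m ih =>
      intro y hy
      rw [Pi.single_add, ← add_assoc]
      exact add_single _ i (ih y hy)

section ToWithZero

variable {N G : Type*} [AddCommMonoid N] [PartialOrder N] [CanonicallyOrderedAdd N]
  [DecidableEq N] [AddMonoid G]

def AddMonoidHom.toWithZero (g : N →+ G) : N →+ WithZero G where
  toFun x := if x = 0 then 0 else g x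
  map_zero' := if_pos rfl
  map_add' x y := by
    by_cases hx : x = 0
    · simp [hx]
    by_cases hy : y = 0
    · simp [hy]
    simp [hx, hy]

theorem AddMonoidHom.toWithZero_apply_of_ne_zero (g : N →+ G) {x : N} (hx : x ≠ 0) :
    g.toWithZero x = g x :=
  if_neg hx

end ToWithZero

section GraphMonoid

variable {n : ℕ}

theorem cls_add (x y : ZMod n → ℕ) : cls n (x + y) = cls n x + cls n y := rfl

theorem cls_single (i : ZMod n) :
    cls n (Pi.single i 1) = cls n (Pi.single (i - 1) 1) + cls n (Pi.single (i + 1) 1) :=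
  (AddCon.eq _).mpr (AddConGen.Rel.of _ _ ⟨i, rfl, rfl⟩)

variable {M : Type*} [AddMonoid M] (f : (ZMod n → ℕ) →+ M)

theorem graphCon_le_ker
    (hf : ∀ i, f (Pi.single i 1) = f (Pi.single (i - 1) 1) + f (Pi.single (i + 1) 1)) :
    graphCon n ≤ AddCon.ker f :=
  AddCon.addConGen_le.mpr fun _ _ ⟨i, hx, hy⟩ =>
    (AddCon.ker_rel f).mpr (by rw [hx, hy, map_add, hf])

theorem pairwise_map_cls_ne
    (hf : ∀ i, f (Pi.single i 1) = f (Pi.single (i - 1) 1) + f (Pi.single (i + 1) 1))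
    {l : List (ZMod n → ℕ)} (hl : (l.map f).Pairwise (· ≠ ·)) :
    (l.map (cls n)).Pairwise (· ≠ ·) :=
  (List.pairwise_map.mp hl).map _ fun _ _ hne hcls =>
    hne ((AddCon.ker_rel f).mp (graphCon_le_ker f hf ((AddCon.eq _).mp hcls)))

end GraphMonoid

section CycleThree

local notation "e" i => cls 3 (Pi.single i 1)

theorem cls_single_add_single_of_ne {i j k : ZMod 3} (hij : i ≠ j) (hjk : j ≠ k) (hik : i ≠ k) :
    (e i) + (e j) = e k := by
  obtain ⟨rfl, rfl⟩ | ⟨rfl, rfl⟩ : (i = k - 1 ∧ j = k + 1) ∨ (i = k + 1 ∧ j = k - 1) := by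
    revert i j k; decide
  · exact (cls_single k).symm
  · exact (add_comm _ _).trans (cls_single k).symm

theorem cls_single_add_self (i : ZMod 3) : (e i) + (e i) = cls 3 1 := by
  nth_rewrite 2 [cls_single i]
  rw [← add_assoc, ← cls_add, ← cls_add]
  congr 1
  revert i; decide

theorem cls_one_add_single (i : ZMod 3) : cls 3 1 + (e i) = e i := by
  obtain ⟨j, k, hij, hjk, hik⟩ : ∃ j k : ZMod 3, i ≠ j ∧ j ≠ k ∧ i ≠ k := by revert i; decide
  rw [← cls_single_add_self j, add_assoc, cls_single_add_single_of_ne hij.symm hik hjk,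
    cls_single_add_single_of_ne hjk hik.symm hij.symm]

theorem graphMonoid_three_cases (z : graphMonoid 3) :
    z = cls 3 0 ∨ z = cls 3 1 ∨ ∃ i, z = e i := by
  induction z using AddCon.induction_on with | H x => ?_
  induction x using Pi.induction_add_single with
  | zero => exact Or.inl rfl
  | add_single x i hx =>
    rw [AddCon.coe_add]
    obtain h | h | ⟨j, h⟩ := hx <;> rw [h]
    · exact Or.inr (Or.inr ⟨i, zero_add _⟩)
    · exact Or.inr (Or.inr ⟨i, cls_one_add_single i⟩)
    · by_cases hji : j = i
      · exact Or.inr (Or.inl (hji ▸ cls_single_add_self j))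
      · have third : ∀ i j : ZMod 3, ∃ k, j ≠ k ∧ i ≠ k := by decide
        obtain ⟨k, hjk, hik⟩ := third i j
        exact Or.inr (Or.inr ⟨k, cls_single_add_single_of_ne hji hik hjk⟩)

end CycleThree

def kleinLabel : ZMod 3 → ZMod 2 × ZMod 2 := ![(1, 0), (0, 1), (1, 1)]

theorem kleinLabel_eq_add (i : ZMod 3) :
    kleinLabel i = kleinLabel (i - 1) + kleinLabel (i + 1) := by
  revert i; decide

theorem sum_kleinLabel : ∑ i, kleinLabel i = 0 := by decide

def graphInvariant : (ZMod 3 → ℕ) →+ WithZero (ZMod 2 × ZMod 2) :=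
  (Fintype.linearCombination ℕ kleinLabel).toAddMonoidHom.toWithZero

theorem graphInvariant_single (i : ZMod 3) : graphInvariant (Pi.single i 1) = kleinLabel i := by
  simp [graphInvariant, AddMonoidHom.toWithZero_apply_of_ne_zero,
    Fintype.linearCombination_apply_single]

theorem graphInvariant_one : graphInvariant 1 = (0 : ZMod 2 × ZMod 2) := by
  simp [graphInvariant, AddMonoidHom.toWithZero_apply_of_ne_zero, Fintype.linearCombination_apply,
    sum_kleinLabel]

theorem graphInvariant_single_eq_add (i : ZMod 3) :
    graphInvariant (Pi.single i 1) =
      graphInvariant (Pi.single (i - 1) 1) + graphInvariant (Pi.single (i + 1) 1) := by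
  simp only [graphInvariant_single, ← WithZero.coe_add]
  exact congrArg _ (kleinLabel_eq_add i)

theorem graphMonoid_three_description :
    (∀ z : graphMonoid 3,
      z = cls 3 0 ∨ z = cls 3 (Pi.single 0 1) ∨ z = cls 3 (Pi.single 1 1) ∨
      z = cls 3 (Pi.single 2 1) ∨
      z = cls 3 (Pi.single 0 1 + Pi.single 1 1 + Pi.single 2 1)) ∧
    List.Pairwise (· ≠ ·)
      [cls 3 0, cls 3 (Pi.single 0 1), cls 3 (Pi.single 1 1), cls 3 (Pi.single 2 1),
       cls 3 (Pi.single 0 1 + Pi.single 1 1 + Pi.single 2 1)] := by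
  have hsum : (Pi.single 0 1 + Pi.single 1 1 + Pi.single 2 1 : ZMod 3 → ℕ) = 1 := by decide
  rw [hsum]
  constructor
  · intro z
    obtain h | h | ⟨i, rfl⟩ := graphMonoid_three_cases z
    · exact Or.inl h
    · exact Or.inr (Or.inr (Or.inr (Or.inr h)))
    · obtain rfl | rfl | rfl : i = 0 ∨ i = 1 ∨ i = 2 := by revert i; decide
      all_goals simp
  · refine pairwise_map_cls_ne graphInvariant graphInvariant_single_eq_add
      (l := [0, Pi.single 0 1, Pi.single 1 1, Pi.single 2 1, 1]) ?_
    simp only [List.map, map_zero, graphInvariant_single, graphInvariant_one]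
    decide
end
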